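/- Let φ : Ŷ → ℝ be continuous, tri-scaling-invariant, G-invariant and ĝ-admissible. Then for all real numbers x_0,…,x_k, x_{k+2},…,x_m > 0, (φ−ψ̂)((x_0,x_1,…,x_k,1,x_{k+2},…,x_m),(x_0,x_1,…,x_k),(1,x_{k+2},…,x_m)) ≥ (φ−ψ̂)((η,…,η,1,x_{k+2},…,x_m),(1,…,1),(1,x_{k+2},…,x_m)), where η = (x_0 x_1⋯x_k)^{1/(k+1)} occupies the first k+1 coordinates of the first vector. -/

import Mathlib

open Complex MeasureTheory Finset

noncomputable section

/-- Squared norm of a complex vector. -/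
def nsq {n : ℕ} (z : Fin n → ℂ) : ℝ := ∑ i, ‖z i‖ ^ 2

/-- Laplacian at a point of a real-valued function of one complex variable. -/
def lap (f : ℂ → ℝ) (t : ℂ) : ℝ :=
  lineDeriv ℝ (fun s => lineDeriv ℝ f s 1) t 1 +
  lineDeriv ℝ (fun s => lineDeriv ℝ f s Complex.I) t Complex.I

/-- Points of the total space for Y. -/
abbrev YPt (m k : ℕ) :=
  (Fin (m + 1) → ℂ) × (Fin (k + 1) → ℂ) × (Fin (m - k) → ℂ)

/-- The point of `Fin (m+1)` corresponding to an index in `{0,...,k}`. -/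
def embX (m k : ℕ) (hkm : k ≤ m) (i : Fin (k + 1)) : Fin (m + 1) :=
  ⟨(i : ℕ), by have := i.isLt; omega⟩

/-- The point of `Fin (m+1)` corresponding to an index in `{k+1,...,m}`. -/
def embY (m k : ℕ) (hkm : k ≤ m) (j : Fin (m - k)) : Fin (m + 1) :=
  ⟨k + 1 + (j : ℕ), by have := j.isLt; omega⟩

/-- Points of `(ℂ^{m+1}\{0}) × (ℂ^{k+1}\{0}) × (ℂ^{m-k}\{0})` lifting the blow-up Y. -/
def inYhat (m k : ℕ) (hkm : k ≤ m) (p : YPt m k) : Prop :=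
  p.1 ≠ 0 ∧ p.2.1 ≠ 0 ∧ p.2.2 ≠ 0 ∧
    (∀ i j : Fin (k + 1),
      p.1 (embX m k hkm i) * p.2.1 j = p.1 (embX m k hkm j) * p.2.1 i) ∧
    (∀ i j : Fin (m - k),
      p.1 (embY m k hkm i) * p.2.2 j = p.1 (embY m k hkm j) * p.2.2 i)

def psiY1 (m k : ℕ) (p : YPt m k) : ℝ :=
  Real.log
    ((∏ i ∈ Finset.univ.filter (fun i : Fin (m + 1) => (i : ℕ) ≤ k),
        ‖p.1 i‖) ^ (4 / ((k : ℝ) + 1)) *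
      (∏ j : Fin (k + 1), ‖p.2.1 j‖) ^ (2 * (k : ℝ) / ((k : ℝ) + 1)) *
      (∏ q : Fin (m - k), ‖p.2.2 q‖) ^
        (2 * ((m : ℝ) - (k : ℝ) - 1) / ((m : ℝ) - (k : ℝ))) /
      (nsq p.1 ^ (2 : ℝ) * nsq p.2.1 ^ (k : ℝ) * nsq p.2.2 ^ ((m : ℝ) - (k : ℝ) - 1)))

def psiY2 (m k : ℕ) (p : YPt m k) : ℝ :=
  Real.log
    ((∏ i ∈ Finset.univ.filter (fun i : Fin (m + 1) => k + 1 ≤ (i : ℕ)),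
        ‖p.1 i‖) ^ (4 / ((m : ℝ) - (k : ℝ))) *
      (∏ j : Fin (k + 1), ‖p.2.1 j‖) ^ (2 * (k : ℝ) / ((k : ℝ) + 1)) *
      (∏ q : Fin (m - k), ‖p.2.2 q‖) ^
        (2 * ((m : ℝ) - (k : ℝ) - 1) / ((m : ℝ) - (k : ℝ))) /
      (nsq p.1 ^ (2 : ℝ) * nsq p.2.1 ^ (k : ℝ) * nsq p.2.2 ^ ((m : ℝ) - (k : ℝ) - 1)))

def psiY (m k : ℕ) (p : YPt m k) : ℝ := min (psiY1 m k p) (psiY2 m k p)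

/-- Tri-scaling invariance. -/
def TriScalInv (m k : ℕ) (φ : YPt m k → ℝ) : Prop :=
  ∀ lam mu nu : ℂ, lam ≠ 0 → mu ≠ 0 → nu ≠ 0 →
    ∀ p : YPt m k, φ (lam • p.1, mu • p.2.1, nu • p.2.2) = φ p

/-- Invariance under the group G acting on Y. -/
def GInvY (m k : ℕ) (hkm : k ≤ m) (φ : YPt m k → ℝ) : Prop :=
  (∀ i j : Fin (k + 1), ∀ p : YPt m k,
      φ (p.1 ∘ Equiv.swap (embX m k hkm i) (embX m k hkm j),
         p.2.1 ∘ Equiv.swap i j, p.2.2) = φ p) ∧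
  (∀ i j : Fin (m - k), ∀ p : YPt m k,
      φ (p.1 ∘ Equiv.swap (embY m k hkm i) (embY m k hkm j),
         p.2.1, p.2.2 ∘ Equiv.swap i j) = φ p) ∧
  (∀ l : Fin (k + 1), ∀ θ : ℝ, ∀ p : YPt m k,
      φ (Function.update p.1 (embX m k hkm l)
            (Complex.exp ((θ : ℂ) * Complex.I) * p.1 (embX m k hkm l)),
         Function.update p.2.1 l (Complex.exp ((θ : ℂ) * Complex.I) * p.2.1 l),
         p.2.2) = φ p) ∧
  (∀ l : Fin (m - k), ∀ θ : ℝ, ∀ p : YPt m k,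
      φ (Function.update p.1 (embY m k hkm l)
            (Complex.exp ((θ : ℂ) * Complex.I) * p.1 (embY m k hkm l)),
         p.2.1,
         Function.update p.2.2 l (Complex.exp ((θ : ℂ) * Complex.I) * p.2.2 l)) = φ p)

/-- A vector tangent to the orbit of the tri-scaling action at p. -/
def tangentY (m k : ℕ) (p v : YPt m k) : Prop :=
  ∃ a b d : ℂ, v = (a • p.1, b • p.2.1, d • p.2.2)

/-- Local potential of ĝ plus φ along a curve. -/
def FY (m k : ℕ) (φ : YPt m k → ℝ) (c : ℂ → YPt m k) (t : ℂ) : ℝ :=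
  2 * Real.log (nsq (c t).1) + (k : ℝ) * Real.log (nsq (c t).2.1) +
    ((m : ℝ) - (k : ℝ) - 1) * Real.log (nsq (c t).2.2) + φ (c t)

/-- ĝ-admissibility. -/
def AdmY (m k : ℕ) (hkm : k ≤ m) (φ : YPt m k → ℝ) : Prop :=
  ∀ r : ℝ, 0 < r → ∀ c : ℂ → YPt m k,
    DifferentiableOn ℂ c (Metric.ball 0 r) →
    (∀ t ∈ Metric.ball (0 : ℂ) r, inYhat m k hkm (c t)) →
    ContDiffOn ℝ (⊤ : ℕ∞) (FY m k φ c) (Metric.ball 0 r) ∧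
    (∀ t ∈ Metric.ball (0 : ℂ) r, 0 ≤ lap (FY m k φ c) t) ∧
    (∀ t ∈ Metric.ball (0 : ℂ) r, ¬ tangentY m k (c t) (deriv c t) →
      0 < lap (FY m k φ c) t)

namespace Aux15

variable {m k : ℕ}

lemma embX_le (h : k ≤ m) (i : Fin (k + 1)) : ((embX m k h i : ℕ)) ≤ k :=
  Nat.lt_succ_iff.mp i.isLt

lemma embX_inj (h : k ≤ m) : Function.Injective (embX m k h) := fun a b hab =>
  Fin.ext (by simpa [embX, Fin.ext_iff] using hab)

lemma embY_not_le (h : k ≤ m) (q : Fin (m - k)) : ¬ ((embY m k h q : ℕ) ≤ k) := by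
  simp only [embY]; omega

lemma head_eq_image (h : k ≤ m) :
    (Finset.univ.filter fun i : Fin (m + 1) => (i : ℕ) ≤ k) =
      Finset.image (embX m k h) Finset.univ := by
  ext i
  simp only [mem_filter, mem_univ, true_and, Finset.mem_image]
  constructor
  · intro hi; exact ⟨⟨(i : ℕ), Nat.lt_succ_of_le hi⟩, rfl⟩
  · rintro ⟨j, rfl⟩; exact embX_le h j

lemma prod_head (h : k ≤ m) (f : Fin (m + 1) → ℝ) :
    (∏ i ∈ Finset.univ.filter (fun i : Fin (m + 1) => (i : ℕ) ≤ k), f i) =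
      ∏ j : Fin (k + 1), f (embX m k h j) := by
  rw [head_eq_image h, Finset.prod_image (fun a _ b _ hab => embX_inj h hab)]

lemma nsq_nonneg {n : ℕ} (z : Fin n → ℂ) : 0 ≤ nsq z :=
  Finset.sum_nonneg fun i _ => by positivity

lemma nsq_pos {n : ℕ} (z : Fin n → ℂ) (i : Fin n) (hi : z i ≠ 0) : 0 < nsq z :=
  Finset.sum_pos' (fun j _ => by positivity)
    ⟨i, mem_univ _, by have := norm_pos_iff.mpr hi; positivity⟩

lemma nsq_smul {n : ℕ} (c : ℂ) (z : Fin n → ℂ) :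
    nsq (c • z) = ‖c‖ ^ 2 * nsq z := by
  simp only [nsq, Pi.smul_apply, smul_eq_mul, norm_mul, mul_pow, Finset.mul_sum]

lemma nsq_comp {n : ℕ} (e : Equiv.Perm (Fin n)) (z : Fin n → ℂ) :
    nsq (z ∘ e) = nsq z :=
  Equiv.sum_comp e (fun i => ‖z i‖ ^ 2)

lemma nsq_congr_abs {n : ℕ} (z w : Fin n → ℂ)
    (hzw : ∀ i, ‖z i‖ = ‖w i‖) : nsq z = nsq w :=
  Finset.sum_congr rfl fun i _ => by rw [hzw]

lemma psi1_formula (hmk : k + 1 ≤ m) (p : YPt m k)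
    (hz : ∀ i, p.1 i ≠ 0) (hζ : ∀ j, p.2.1 j ≠ 0) (hη : ∀ q, p.2.2 q ≠ 0) :
    psiY1 m k p =
      (4 / ((k : ℝ) + 1)) * Real.log
          (∏ i ∈ Finset.univ.filter (fun i : Fin (m + 1) => (i : ℕ) ≤ k),
            ‖p.1 i‖) +
        (2 * (k : ℝ) / ((k : ℝ) + 1)) * Real.log (∏ j, ‖p.2.1 j‖) +
        (2 * ((m : ℝ) - (k : ℝ) - 1) / ((m : ℝ) - (k : ℝ))) *
          Real.log (∏ q, ‖p.2.2 q‖) -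
        (2 * Real.log (nsq p.1) + (k : ℝ) * Real.log (nsq p.2.1) +
          ((m : ℝ) - (k : ℝ) - 1) * Real.log (nsq p.2.2)) := by
  have hA : 0 < ∏ i ∈ Finset.univ.filter (fun i : Fin (m + 1) => (i : ℕ) ≤ k),
      ‖p.1 i‖ := Finset.prod_pos fun i _ => norm_pos_iff.mpr (hz i)
  have hB : 0 < ∏ j, ‖p.2.1 j‖ :=
    Finset.prod_pos fun j _ => norm_pos_iff.mpr (hζ j)
  have hC : 0 < ∏ q, ‖p.2.2 q‖ :=
    Finset.prod_pos fun q _ => norm_pos_iff.mpr (hη q)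
  have hD : 0 < nsq p.1 := nsq_pos _ 0 (hz 0)
  have hE : 0 < nsq p.2.1 := nsq_pos _ 0 (hζ 0)
  have hF : 0 < nsq p.2.2 := nsq_pos _ ⟨0, by omega⟩ (hη ⟨0, by omega⟩)
  unfold psiY1
  rw [Real.log_div (by positivity) (by positivity),
    Real.log_mul (by positivity) (by positivity),
    Real.log_mul (by positivity) (by positivity),
    Real.log_mul (by positivity) (by positivity),
    Real.log_mul (by positivity) (by positivity),
    Real.log_rpow hA, Real.log_rpow hB, Real.log_rpow hC,
    Real.log_rpow hD, Real.log_rpow hE, Real.log_rpow hF]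

lemma psi2_formula (hmk : k + 1 ≤ m) (p : YPt m k)
    (hz : ∀ i, p.1 i ≠ 0) (hζ : ∀ j, p.2.1 j ≠ 0) (hη : ∀ q, p.2.2 q ≠ 0) :
    psiY2 m k p =
      (4 / ((m : ℝ) - (k : ℝ))) * Real.log
          (∏ i ∈ Finset.univ.filter (fun i : Fin (m + 1) => k + 1 ≤ (i : ℕ)),
            ‖p.1 i‖) +
        (2 * (k : ℝ) / ((k : ℝ) + 1)) * Real.log (∏ j, ‖p.2.1 j‖) +
        (2 * ((m : ℝ) - (k : ℝ) - 1) / ((m : ℝ) - (k : ℝ))) *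
          Real.log (∏ q, ‖p.2.2 q‖) -
        (2 * Real.log (nsq p.1) + (k : ℝ) * Real.log (nsq p.2.1) +
          ((m : ℝ) - (k : ℝ) - 1) * Real.log (nsq p.2.2)) := by
  have hA : 0 < ∏ i ∈ Finset.univ.filter (fun i : Fin (m + 1) => k + 1 ≤ (i : ℕ)),
      ‖p.1 i‖ := Finset.prod_pos fun i _ => norm_pos_iff.mpr (hz i)
  have hB : 0 < ∏ j, ‖p.2.1 j‖ :=
    Finset.prod_pos fun j _ => norm_pos_iff.mpr (hζ j)
  have hC : 0 < ∏ q, ‖p.2.2 q‖ :=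
    Finset.prod_pos fun q _ => norm_pos_iff.mpr (hη q)
  have hD : 0 < nsq p.1 := nsq_pos _ 0 (hz 0)
  have hE : 0 < nsq p.2.1 := nsq_pos _ 0 (hζ 0)
  have hF : 0 < nsq p.2.2 := nsq_pos _ ⟨0, by omega⟩ (hη ⟨0, by omega⟩)
  unfold psiY2
  rw [Real.log_div (by positivity) (by positivity),
    Real.log_mul (by positivity) (by positivity),
    Real.log_mul (by positivity) (by positivity),
    Real.log_mul (by positivity) (by positivity),
    Real.log_mul (by positivity) (by positivity),
    Real.log_rpow hA, Real.log_rpow hB, Real.log_rpow hC,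
    Real.log_rpow hD, Real.log_rpow hE, Real.log_rpow hF]

end Aux15
namespace Aux15

section Points

variable {m k : ℕ}

variable (h : k ≤ m) (tail : Fin (m + 1) → ℂ)

/-- The z-vector with head coordinates `exp (b i)` and fixed tail. -/
def zfun (b : Fin (k + 1) → ℝ) : Fin (m + 1) → ℂ := fun i =>
  if hi : (i : ℕ) ≤ k then Complex.exp ((b ⟨(i : ℕ), Nat.lt_succ_of_le hi⟩ : ℝ) : ℂ)
  else tail i

/-- The point of Ŷ with head coordinates `exp (b i)` and fixed tail. -/
def Pt (b : Fin (k + 1) → ℝ) : YPt m k :=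
  (zfun tail b, fun j => Complex.exp ((b j : ℝ) : ℂ),
    fun q => tail (embY m k h q))

/-- The local potential evaluated at `Pt`. -/
def Vf (φ : YPt m k → ℝ) (b : Fin (k + 1) → ℝ) : ℝ :=
  2 * Real.log (nsq (Pt h tail b).1) + (k : ℝ) * Real.log (nsq (Pt h tail b).2.1) +
    ((m : ℝ) - (k : ℝ) - 1) * Real.log (nsq (Pt h tail b).2.2) + φ (Pt h tail b)

/-- Holomorphic curve through the points `Pt (b + σ • w)`. -/
def cvf (b w : Fin (k + 1) → ℝ) : ℂ → YPt m k := fun t =>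
  (fun i => if hi : (i : ℕ) ≤ k then
      Complex.exp ((b ⟨(i : ℕ), Nat.lt_succ_of_le hi⟩ : ℂ) +
        (w ⟨(i : ℕ), Nat.lt_succ_of_le hi⟩ : ℂ) * t)
    else tail i,
   fun j => Complex.exp ((b j : ℂ) + (w j : ℂ) * t),
   fun q => tail (embY m k h q))

lemma cvf_real (b w : Fin (k + 1) → ℝ) (σ : ℝ) :
    cvf h tail b w (σ : ℂ) = Pt h tail (b + σ • w) := by
  unfold cvf Pt zfun
  refine Prod.ext ?_ (Prod.ext ?_ rfl)
  · funext i
    by_cases hi : (i : ℕ) ≤ k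
    · simp only [dif_pos hi]
      congr 1
      push_cast [Pi.add_apply, Pi.smul_apply, smul_eq_mul]
      ring
    · simp only [dif_neg hi]
  · funext j
    simp only
    congr 1
    push_cast [Pi.add_apply, Pi.smul_apply, smul_eq_mul]
    ring

lemma cvf_inYhat (hmk : k + 1 ≤ m)
    (htail : ∀ q, tail (embY m k h q) ≠ 0) (b w : Fin (k + 1) → ℝ) (t : ℂ) :
    inYhat m k h (cvf h tail b w t) := by
  have hzhead : ∀ i : Fin (k + 1),
      (cvf h tail b w t).1 (embX m k h i) = (cvf h tail b w t).2.1 i := by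
    intro i
    simp only [cvf, dif_pos (embX_le h i)]
    rfl
  have hztail : ∀ q : Fin (m - k),
      (cvf h tail b w t).1 (embY m k h q) = (cvf h tail b w t).2.2 q := by
    intro q
    simp only [cvf, dif_neg (embY_not_le h q)]
  refine ⟨?_, ?_, ?_, ?_, ?_⟩
  · intro h0
    have := congrFun h0 (embX m k h 0)
    rw [hzhead 0] at this
    exact Complex.exp_ne_zero _ this
  · intro h0
    exact Complex.exp_ne_zero _ (congrFun h0 0)
  · intro h0
    exact htail ⟨0, by omega⟩ (congrFun h0 ⟨0, by omega⟩)
  · intro i j; rw [hzhead i, hzhead j]; ring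
  · intro i j; rw [hztail i, hztail j]; ring

lemma cvf_diff (b w : Fin (k + 1) → ℝ) : Differentiable ℂ (cvf h tail b w) := by
  refine Differentiable.prodMk ?_ (Differentiable.prodMk ?_ ?_)
  · refine differentiable_pi.mpr fun i => ?_
    by_cases hi : (i : ℕ) ≤ k
    · simp only [cvf, dif_pos hi]
      exact ((differentiable_const _).add (differentiable_id.const_mul _)).cexp
    · simp only [cvf, dif_neg hi]
      exact differentiable_const _
  · refine differentiable_pi.mpr fun j => ?_
    exact ((differentiable_const _).add (differentiable_id.const_mul _)).cexp
  · exact differentiable_const _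

end Points

end Aux15
namespace Aux15

variable {m k : ℕ}

/-- Multiply the head coordinates indexed by `s` by unit complex numbers. -/
def phasePt (h : k ≤ m) (θ : Fin (k + 1) → ℝ) (s : Finset (Fin (k + 1)))
    (p : YPt m k) : YPt m k :=
  (fun i => (if hi : (i : ℕ) ≤ k then
      (if (⟨(i : ℕ), Nat.lt_succ_of_le hi⟩ : Fin (k + 1)) ∈ s then
        Complex.exp ((θ ⟨(i : ℕ), Nat.lt_succ_of_le hi⟩ : ℂ) * Complex.I) else 1)
    else 1) * p.1 i,
   fun j => (if j ∈ s then Complex.exp ((θ j : ℂ) * Complex.I) else 1) * p.2.1 j,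
   p.2.2)

lemma phasePt_fst (h : k ≤ m) (θ : Fin (k + 1) → ℝ) (s : Finset (Fin (k + 1)))
    (p : YPt m k) (i : Fin (m + 1)) :
    (phasePt h θ s p).1 i = (if hi : (i : ℕ) ≤ k then
      (if (⟨(i : ℕ), Nat.lt_succ_of_le hi⟩ : Fin (k + 1)) ∈ s then
        Complex.exp ((θ ⟨(i : ℕ), Nat.lt_succ_of_le hi⟩ : ℂ) * Complex.I) else 1)
    else 1) * p.1 i := rfl

lemma phasePt_snd (h : k ≤ m) (θ : Fin (k + 1) → ℝ) (s : Finset (Fin (k + 1)))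
    (p : YPt m k) (j : Fin (k + 1)) :
    (phasePt h θ s p).2.1 j =
      (if j ∈ s then Complex.exp ((θ j : ℂ) * Complex.I) else 1) * p.2.1 j := rfl

lemma phasePt_empty (h : k ≤ m) (θ : Fin (k + 1) → ℝ) (p : YPt m k) :
    phasePt h θ ∅ p = p := by
  refine Prod.ext (funext fun i => ?_) (Prod.ext (funext fun j => ?_) rfl)
  · rw [phasePt_fst]
    by_cases hi : (i : ℕ) ≤ k <;> simp [hi]
  · rw [phasePt_snd]; simp

lemma phasePt_insert (h : k ≤ m) (θ : Fin (k + 1) → ℝ) (s : Finset (Fin (k + 1)))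
    (l : Fin (k + 1)) (hl : l ∉ s) (p : YPt m k) :
    phasePt h θ (insert l s) p =
      (Function.update (phasePt h θ s p).1 (embX m k h l)
          (Complex.exp ((θ l : ℂ) * Complex.I) * (phasePt h θ s p).1 (embX m k h l)),
       Function.update (phasePt h θ s p).2.1 l
          (Complex.exp ((θ l : ℂ) * Complex.I) * (phasePt h θ s p).2.1 l),
       (phasePt h θ s p).2.2) := by
  refine Prod.ext (funext fun i => ?_) (Prod.ext (funext fun j => ?_) rfl)
  · show (phasePt h θ (insert l s) p).1 i = Function.update (phasePt h θ s p).1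
      (embX m k h l)
      (Complex.exp ((θ l : ℂ) * Complex.I) * (phasePt h θ s p).1 (embX m k h l)) i
    by_cases hie : i = embX m k h l
    · subst hie
      rw [Function.update_self, phasePt_fst, phasePt_fst]
      have hi : ((embX m k h l : ℕ)) ≤ k := embX_le h l
      have hfin : (⟨((embX m k h l : ℕ)), Nat.lt_succ_of_le hi⟩ : Fin (k + 1)) = l := rfl
      simp only [dif_pos hi, hfin, Finset.mem_insert_self, if_pos, if_neg hl]
      ring
    · rw [Function.update_of_ne hie, phasePt_fst, phasePt_fst]
      by_cases hi : (i : ℕ) ≤ k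
      · have hne : (⟨(i : ℕ), Nat.lt_succ_of_le hi⟩ : Fin (k + 1)) ≠ l := by
          intro hc
          have hv : (i : ℕ) = (l : ℕ) := congrArg Fin.val hc
          exact hie (Fin.ext hv)
        simp only [dif_pos hi, Finset.mem_insert, hne, false_or]
      · simp only [dif_neg hi]
  · show (phasePt h θ (insert l s) p).2.1 j = Function.update (phasePt h θ s p).2.1 l
      (Complex.exp ((θ l : ℂ) * Complex.I) * (phasePt h θ s p).2.1 l) j
    by_cases hje : j = l
    · subst hje
      rw [Function.update_self, phasePt_snd, phasePt_snd,
        if_pos (Finset.mem_insert_self _ _), if_neg hl]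
      ring
    · rw [Function.update_of_ne hje, phasePt_snd, phasePt_snd]
      simp only [Finset.mem_insert, hje, false_or]

lemma phase_inv (h : k ≤ m) {φ : YPt m k → ℝ}
    (hφ : ∀ l : Fin (k + 1), ∀ θ : ℝ, ∀ p : YPt m k,
      φ (Function.update p.1 (embX m k h l)
            (Complex.exp ((θ : ℂ) * Complex.I) * p.1 (embX m k h l)),
         Function.update p.2.1 l (Complex.exp ((θ : ℂ) * Complex.I) * p.2.1 l),
         p.2.2) = φ p)
    (θ : Fin (k + 1) → ℝ) (s : Finset (Fin (k + 1))) (p : YPt m k) :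
    φ (phasePt h θ s p) = φ p := by
  induction s using Finset.induction_on with
  | empty => rw [phasePt_empty]
  | insert l s' hl ih =>
    rw [phasePt_insert h θ s' l hl p, hφ l (θ l) (phasePt h θ s' p)]
    exact ih

end Aux15
namespace Aux15

variable {m k : ℕ}

lemma lap_of_re (g : ℂ → ℝ) (u : ℝ → ℝ) (hgu : ∀ t, g t = u t.re) (x : ℂ) :
    lap g x = deriv (deriv u) x.re := by
  have h1 : ∀ s : ℂ, lineDeriv ℝ g s 1 = deriv u s.re := by
    intro s
    have he : (fun τ : ℝ => g (s + τ • (1 : ℂ))) = fun τ : ℝ => u (s.re + τ) := by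
      funext τ
      rw [hgu]
      congr 1
      simp [Complex.real_smul]
    unfold lineDeriv
    rw [he, deriv_comp_const_add, add_zero]
  have h2 : ∀ s : ℂ, lineDeriv ℝ g s Complex.I = 0 := by
    intro s
    have he : (fun τ : ℝ => g (s + τ • Complex.I)) = fun _ : ℝ => u s.re := by
      funext τ
      rw [hgu]
      congr 1
      simp [Complex.real_smul]
    unfold lineDeriv
    rw [he, deriv_const]
  unfold lap
  rw [funext h2, funext h1]
  have h3 : lineDeriv ℝ (fun s : ℂ => deriv u s.re) x 1 = deriv (deriv u) x.re := by
    have he : (fun τ : ℝ => (fun s : ℂ => deriv u s.re) (x + τ • (1 : ℂ))) =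
        fun τ : ℝ => deriv u (x.re + τ) := by
      funext τ
      simp [Complex.real_smul]
    unfold lineDeriv
    rw [he, deriv_comp_const_add, add_zero]
  have h4 : lineDeriv ℝ (fun _ : ℂ => (0 : ℝ)) x Complex.I = 0 := by
    unfold lineDeriv
    exact deriv_const _ _
  rw [h3, h4, add_zero]

lemma key_convex (h : k ≤ m) (hmk : k + 1 ≤ m) (φ : YPt m k → ℝ)
    (hφ3 : ∀ l : Fin (k + 1), ∀ θ : ℝ, ∀ p : YPt m k,
      φ (Function.update p.1 (embX m k h l)
            (Complex.exp ((θ : ℂ) * Complex.I) * p.1 (embX m k h l)),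
         Function.update p.2.1 l (Complex.exp ((θ : ℂ) * Complex.I) * p.2.1 l),
         p.2.2) = φ p)
    (hadm : AdmY m k h φ)
    (tail : Fin (m + 1) → ℂ) (htail : ∀ q, tail (embY m k h q) ≠ 0)
    (b w : Fin (k + 1) → ℝ) :
    ConvexOn ℝ Set.univ (fun σ : ℝ => Vf h tail φ (b + σ • w)) := by
  set c := cvf h tail b w with hc
  set g := FY m k φ c with hgdef
  set u : ℝ → ℝ := fun σ => g ((σ : ℝ) : ℂ) with hu
  -- the curve at t is a phase modification of the curve at Re t
  have hcveq : ∀ t : ℂ,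
      c t = phasePt h (fun j => w j * t.im) Finset.univ (c ((t.re : ℝ) : ℂ)) := by
    intro t
    refine Prod.ext (funext fun i => ?_) (Prod.ext (funext fun j => ?_) rfl)
    · rw [phasePt_fst]
      by_cases hi : (i : ℕ) ≤ k
      · simp only [hc, cvf, dif_pos hi, if_pos (Finset.mem_univ _)]
        rw [← Complex.exp_add]
        congr 1
        push_cast
        linear_combination (-((w ⟨(i : ℕ), Nat.lt_succ_of_le hi⟩ : ℝ) : ℂ)) *
          Complex.re_add_im t
      · simp only [hc, cvf, dif_neg hi, one_mul]
    · rw [phasePt_snd, if_pos (Finset.mem_univ _)]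
      simp only [hc, cvf]
      rw [← Complex.exp_add]
      congr 1
      push_cast
      linear_combination (-((w j : ℝ) : ℂ)) * Complex.re_add_im t
  have habs1 : ∀ (t : ℂ) (i : Fin (m + 1)),
      ‖(c t).1 i‖ = ‖(c ((t.re : ℝ) : ℂ)).1 i‖ := by
    intro t i
    by_cases hi : (i : ℕ) ≤ k
    · simp only [hc, cvf, dif_pos hi, Complex.norm_exp]
      congr 1
      simp [Complex.add_re, Complex.mul_re]
    · simp only [hc, cvf, dif_neg hi]
  have habs2 : ∀ (t : ℂ) (j : Fin (k + 1)),
      ‖(c t).2.1 j‖ = ‖(c ((t.re : ℝ) : ℂ)).2.1 j‖ := by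
    intro t j
    simp only [hc, cvf, Complex.norm_exp]
    congr 1
    simp [Complex.add_re, Complex.mul_re]
  have hgt : ∀ t : ℂ, g t = u t.re := by
    intro t
    show FY m k φ c t = FY m k φ c ((t.re : ℝ) : ℂ)
    unfold FY
    rw [nsq_congr_abs _ _ (habs1 t), nsq_congr_abs _ _ (habs2 t),
      hcveq t, phase_inv h hφ3]
    rfl
  have main : ∀ R : ℝ, 0 < R → ContDiffOn ℝ (⊤ : ℕ∞) g (Metric.ball 0 R) ∧
      ∀ t ∈ Metric.ball (0 : ℂ) R, 0 ≤ lap g t := by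
    intro R hR
    obtain ⟨h1, h2, -⟩ := hadm R hR c (cvf_diff h tail b w).differentiableOn
      (fun t _ => cvf_inYhat h tail hmk htail b w t)
    exact ⟨h1, h2⟩
  have hmem : ∀ (R σ : ℝ), |σ| < R → ((σ : ℝ) : ℂ) ∈ Metric.ball (0 : ℂ) R := by
    intro R σ hσ
    simp only [Metric.mem_ball, dist_zero_right, Complex.norm_real, Real.norm_eq_abs]
    exact hσ
  have huC : ContDiff ℝ (⊤ : ℕ∞) u := by
    rw [contDiff_iff_contDiffAt]
    intro σ
    have hR : (0 : ℝ) < |σ| + 1 := by positivity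
    have hg_at : ContDiffAt ℝ (⊤ : ℕ∞) g ((σ : ℝ) : ℂ) :=
      (main _ hR).1.contDiffAt (Metric.isOpen_ball.mem_nhds
        (hmem _ σ (by linarith [abs_nonneg σ])))
    exact hg_at.comp σ
      ((Complex.ofRealCLM.contDiff : ContDiff ℝ (⊤ : ℕ∞) fun σ : ℝ => ((σ : ℝ) : ℂ)).contDiffAt)
  have hder2 : ∀ σ : ℝ, 0 ≤ deriv (deriv u) σ := by
    intro σ
    have hR : (0 : ℝ) < |σ| + 1 := by positivity
    have hlp := (main _ hR).2 ((σ : ℝ) : ℂ) (hmem _ σ (by linarith [abs_nonneg σ]))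
    rwa [lap_of_re g u hgt, Complex.ofReal_re] at hlp
  have hu1 : ContDiff ℝ ((⊤ : ℕ∞) : WithTop ℕ∞) u := huC.of_le (by simp)
  have hueq : u = fun σ : ℝ => Vf h tail φ (b + σ • w) := by
    funext σ
    show FY m k φ c ((σ : ℝ) : ℂ) = _
    unfold FY Vf
    rw [hc, cvf_real]
  rw [← hueq]
  refine convexOn_of_deriv2_nonneg convex_univ huC.continuous.continuousOn ?_ ?_ ?_
  · rw [interior_univ]
    exact (hu1.differentiable (by simp)).differentiableOn
  · rw [interior_univ]
    exact ((contDiff_infty_iff_deriv.mp hu1).2.differentiable (by simp)).differentiableOn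
  · intro x _
    rw [Function.iterate_succ_apply', Function.iterate_one]
    exact hder2 x

end Aux15
namespace Aux15

variable {m k : ℕ}

lemma Vf_convexOn (h : k ≤ m) (hmk : k + 1 ≤ m) (φ : YPt m k → ℝ)
    (hφ3 : ∀ l : Fin (k + 1), ∀ θ : ℝ, ∀ p : YPt m k,
      φ (Function.update p.1 (embX m k h l)
            (Complex.exp ((θ : ℂ) * Complex.I) * p.1 (embX m k h l)),
         Function.update p.2.1 l (Complex.exp ((θ : ℂ) * Complex.I) * p.2.1 l),
         p.2.2) = φ p)
    (hadm : AdmY m k h φ)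
    (tail : Fin (m + 1) → ℂ) (htail : ∀ q, tail (embY m k h q) ≠ 0) :
    ConvexOn ℝ Set.univ (Vf h tail φ) := by
  refine ⟨convex_univ, ?_⟩
  intro x _ y _ p q hp hq hpq
  have hcx := key_convex h hmk φ hφ3 hadm tail htail x (y - x)
  have h01 := hcx.2 (Set.mem_univ (0 : ℝ)) (Set.mem_univ (1 : ℝ)) hp hq hpq
  have e0 : x + (p * (0 : ℝ) + q * (1 : ℝ)) • (y - x) = p • x + q • y := by
    funext i
    simp only [Pi.add_apply, Pi.smul_apply, Pi.sub_apply, smul_eq_mul]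
    have : p = 1 - q := by linarith
    subst this
    ring
  have e1 : x + (0 : ℝ) • (y - x) = x := by
    funext i
    simp
  have e2 : x + (1 : ℝ) • (y - x) = y := by
    funext i
    simp
  simpa only [smul_eq_mul, e0, e1, e2] using h01

lemma zfun_embX (h : k ≤ m) (tail : Fin (m + 1) → ℂ) (b : Fin (k + 1) → ℝ)
    (r : Fin (k + 1)) : zfun tail b (embX m k h r) = Complex.exp ((b r : ℝ) : ℂ) := by
  simp only [zfun, dif_pos (embX_le h r)]
  rfl

lemma Vf_swap (h : k ≤ m) (φ : YPt m k → ℝ)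
    (hφ1 : ∀ i j : Fin (k + 1), ∀ p : YPt m k,
      φ (p.1 ∘ Equiv.swap (embX m k h i) (embX m k h j),
         p.2.1 ∘ Equiv.swap i j, p.2.2) = φ p)
    (tail : Fin (m + 1) → ℂ) (i j : Fin (k + 1)) (b : Fin (k + 1) → ℝ) :
    Vf h tail φ (b ∘ Equiv.swap i j) = Vf h tail φ b := by
  have hpt : Pt h tail (b ∘ Equiv.swap i j) =
      ((Pt h tail b).1 ∘ Equiv.swap (embX m k h i) (embX m k h j),
       (Pt h tail b).2.1 ∘ Equiv.swap i j, (Pt h tail b).2.2) := by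
    refine Prod.ext (funext fun l => ?_) (Prod.ext (funext fun r => ?_) rfl)
    · show zfun tail (b ∘ Equiv.swap i j) l =
        zfun tail b (Equiv.swap (embX m k h i) (embX m k h j) l)
      by_cases hl : (l : ℕ) ≤ k
      · have hemb : l = embX m k h ⟨(l : ℕ), Nat.lt_succ_of_le hl⟩ := rfl
        rw [hemb, (embX_inj h).swap_apply]
        rw [zfun_embX h tail, zfun_embX h tail]
        rfl
      · have h1 : l ≠ embX m k h i := by
          intro hc
          exact hl (by rw [hc]; exact embX_le h i)
        have h2 : l ≠ embX m k h j := by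
          intro hc
          exact hl (by rw [hc]; exact embX_le h j)
        rw [Equiv.swap_apply_of_ne_of_ne h1 h2]
        simp only [zfun, dif_neg hl]
    · rfl
  rw [Vf, hpt]
  have n1 : nsq ((Pt h tail b).1 ∘ Equiv.swap (embX m k h i) (embX m k h j)) =
      nsq (Pt h tail b).1 := nsq_comp _ _
  have n2 : nsq ((Pt h tail b).2.1 ∘ Equiv.swap i j) = nsq (Pt h tail b).2.1 :=
    nsq_comp _ _
  rw [n1, n2, hφ1 i j (Pt h tail b)]
  rfl

lemma Vf_perm (h : k ≤ m) (φ : YPt m k → ℝ)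
    (hφ1 : ∀ i j : Fin (k + 1), ∀ p : YPt m k,
      φ (p.1 ∘ Equiv.swap (embX m k h i) (embX m k h j),
         p.2.1 ∘ Equiv.swap i j, p.2.2) = φ p)
    (tail : Fin (m + 1) → ℂ) (π : Equiv.Perm (Fin (k + 1))) (b : Fin (k + 1) → ℝ) :
    Vf h tail φ (b ∘ π) = Vf h tail φ b := by
  have H : ∀ π : Equiv.Perm (Fin (k + 1)), ∀ b : Fin (k + 1) → ℝ,
      Vf h tail φ (b ∘ π) = Vf h tail φ b := by
    intro π
    refine Equiv.Perm.swap_induction_on π (fun b => ?_) ?_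
    · rw [show b ∘ ⇑(1 : Equiv.Perm (Fin (k + 1))) = b from funext fun t => rfl]
    · intro f r s hrs ih b
      have hcomp : b ∘ ⇑(Equiv.swap r s * f) = (b ∘ Equiv.swap r s) ∘ f := by
        funext t
        simp [Equiv.Perm.mul_apply]
      rw [hcomp, ih, Vf_swap h φ hφ1 tail]
  exact H π b

lemma Vf_mean (h : k ≤ m) (hmk : k + 1 ≤ m) (φ : YPt m k → ℝ)
    (hφ1 : ∀ i j : Fin (k + 1), ∀ p : YPt m k,
      φ (p.1 ∘ Equiv.swap (embX m k h i) (embX m k h j),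
         p.2.1 ∘ Equiv.swap i j, p.2.2) = φ p)
    (hφ3 : ∀ l : Fin (k + 1), ∀ θ : ℝ, ∀ p : YPt m k,
      φ (Function.update p.1 (embX m k h l)
            (Complex.exp ((θ : ℂ) * Complex.I) * p.1 (embX m k h l)),
         Function.update p.2.1 l (Complex.exp ((θ : ℂ) * Complex.I) * p.2.1 l),
         p.2.2) = φ p)
    (hadm : AdmY m k h φ)
    (tail : Fin (m + 1) → ℂ) (htail : ∀ q, tail (embY m k h q) ≠ 0)
    (a : Fin (k + 1) → ℝ) :
    Vf h tail φ (fun _ => (∑ j, a j) / ((k : ℝ) + 1)) ≤ Vf h tail φ a := by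
  have hconv := Vf_convexOn h hmk φ hφ3 hadm tail htail
  set wt : Fin (k + 1) → ℝ := fun _ => 1 / ((k : ℝ) + 1) with hwt
  set pts : Fin (k + 1) → (Fin (k + 1) → ℝ) := fun j => a ∘ (Equiv.addLeft j) with hpts
  have hk1 : ((k : ℝ) + 1) ≠ 0 := by positivity
  have hwsum : ∑ j, wt j = 1 := by
    simp only [hwt, Finset.sum_const, Finset.card_univ, Fintype.card_fin,
      nsmul_eq_mul]
    push_cast
    field_simp
  have hjen := hconv.map_sum_le (t := Finset.univ) (w := wt) (p := pts)
    (fun _ _ => by positivity) hwsum (fun _ _ => Set.mem_univ _)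
  have hsum : (∑ j, wt j • pts j) = fun _ => (∑ j, a j) / ((k : ℝ) + 1) := by
    funext i
    rw [Finset.sum_apply]
    simp only [hwt, hpts, Pi.smul_apply, Function.comp_apply, smul_eq_mul,
      Equiv.coe_addLeft]
    rw [← Finset.mul_sum]
    have : (∑ j : Fin (k + 1), a (j + i)) = ∑ j, a j :=
      Equiv.sum_comp (Equiv.addRight i) a
    rw [this]
    ring
  have hvals : ∀ j : Fin (k + 1), Vf h tail φ (pts j) = Vf h tail φ a := by
    intro j
    exact Vf_perm h φ hφ1 tail (Equiv.addLeft j) a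
  rw [hsum] at hjen
  refine le_trans hjen ?_
  have : (∑ j, wt j • Vf h tail φ (pts j)) = Vf h tail φ a := by
    rw [Finset.sum_congr rfl fun j _ => by rw [hvals j]]
    simp only [hwt, smul_eq_mul, Finset.sum_const, Finset.card_univ, Fintype.card_fin,
      nsmul_eq_mul]
    push_cast
    field_simp
  rw [this]

end Aux15
namespace Aux15

variable {m k : ℕ}

lemma psi1_formula' (hmk : k + 1 ≤ m) (z : Fin (m + 1) → ℂ) (ζ : Fin (k + 1) → ℂ)
    (η : Fin (m - k) → ℂ)
    (hz : ∀ i, z i ≠ 0) (hζ : ∀ j, ζ j ≠ 0) (hη : ∀ q, η q ≠ 0) :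
    psiY1 m k (z, ζ, η) =
      (4 / ((k : ℝ) + 1)) * Real.log
          (∏ i ∈ Finset.univ.filter (fun i : Fin (m + 1) => (i : ℕ) ≤ k),
            ‖z i‖) +
        (2 * (k : ℝ) / ((k : ℝ) + 1)) * Real.log (∏ j, ‖ζ j‖) +
        (2 * ((m : ℝ) - (k : ℝ) - 1) / ((m : ℝ) - (k : ℝ))) *
          Real.log (∏ q, ‖η q‖) -
        (2 * Real.log (nsq z) + (k : ℝ) * Real.log (nsq ζ) +
          ((m : ℝ) - (k : ℝ) - 1) * Real.log (nsq η)) :=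
  psi1_formula hmk (z, ζ, η) hz hζ hη

lemma psi2_formula' (hmk : k + 1 ≤ m) (z : Fin (m + 1) → ℂ) (ζ : Fin (k + 1) → ℂ)
    (η : Fin (m - k) → ℂ)
    (hz : ∀ i, z i ≠ 0) (hζ : ∀ j, ζ j ≠ 0) (hη : ∀ q, η q ≠ 0) :
    psiY2 m k (z, ζ, η) =
      (4 / ((m : ℝ) - (k : ℝ))) * Real.log
          (∏ i ∈ Finset.univ.filter (fun i : Fin (m + 1) => k + 1 ≤ (i : ℕ)),
            ‖z i‖) +
        (2 * (k : ℝ) / ((k : ℝ) + 1)) * Real.log (∏ j, ‖ζ j‖) +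
        (2 * ((m : ℝ) - (k : ℝ) - 1) / ((m : ℝ) - (k : ℝ))) *
          Real.log (∏ q, ‖η q‖) -
        (2 * Real.log (nsq z) + (k : ℝ) * Real.log (nsq ζ) +
          ((m : ℝ) - (k : ℝ) - 1) * Real.log (nsq η)) :=
  psi2_formula hmk (z, ζ, η) hz hζ hη

end Aux15
open Aux15 in
theorem stmt15 (m k : ℕ) (hm : 2 ≤ m) (hk : 1 ≤ k) (hkm : k ≤ m - 1)
    (φ : YPt m k → ℝ)
    (hcont : ContinuousOn φ {p | inYhat m k (by omega) p})
    (hscal : TriScalInv m k φ) (hG : GInvY m k (by omega) φ)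
    (hadm : AdmY m k (by omega) φ)
    (x : Fin (m + 1) → ℝ) (hx : ∀ i, 0 < x i) :
    let zA : Fin (m + 1) → ℂ := fun i => if (i : ℕ) = k + 1 then 1 else (x i : ℂ)
    let ζA : Fin (k + 1) → ℂ := fun j => zA (embX m k (by omega) j)
    let ηA : Fin (m - k) → ℂ := fun q => zA (embY m k (by omega) q)
    let ηv : ℝ := (∏ i ∈ Finset.univ.filter (fun i : Fin (m + 1) => (i : ℕ) ≤ k), x i) ^
      (1 / ((k : ℝ) + 1))
    let zB : Fin (m + 1) → ℂ := fun i => if (i : ℕ) ≤ k then (ηv : ℂ) else zA i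
    let oneζ : Fin (k + 1) → ℂ := fun _ => 1
    φ (zB, oneζ, ηA) - psiY m k (zB, oneζ, ηA) ≤
      φ (zA, ζA, ηA) - psiY m k (zA, ζA, ηA) := by
  intro zA ζA ηA ηv zB oneζ
  have h : k ≤ m := by omega
  have hkne : ((k : ℝ) + 1) ≠ 0 := by positivity
  have hmk : k + 1 ≤ m := by omega
  obtain ⟨hG1, hG2, hG3, hG4⟩ := hG
  have hzAdef : zA = fun i : Fin (m + 1) => if (i : ℕ) = k + 1 then 1 else ((x i : ℝ) : ℂ) := rfl
  have hζAdef : ζA = fun j => zA (embX m k h j) := rfl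
  have hηAdef : ηA = fun q => zA (embY m k h q) := rfl
  have hzBdef : zB = fun i : Fin (m + 1) => if (i : ℕ) ≤ k then ((ηv : ℝ) : ℂ) else zA i := rfl
  have honeζdef : oneζ = fun _ : Fin (k + 1) => (1 : ℂ) := rfl
  have hzAx : ∀ i : Fin (m + 1), (i : ℕ) ≤ k → zA i = ((x i : ℝ) : ℂ) := by
    intro i hi
    rw [hzAdef]
    exact if_neg (by omega)
  -- nonvanishing
  have hzAne : ∀ i, zA i ≠ 0 := by
    intro i
    rw [hzAdef]
    dsimp only
    split_ifs
    · exact one_ne_zero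
    · exact_mod_cast (hx i).ne'
  have hζAne : ∀ j, ζA j ≠ 0 := fun j => hzAne _
  have hηAne : ∀ q, ηA q ≠ 0 := fun q => hzAne _
  have honeζne : ∀ j : Fin (k + 1), oneζ j ≠ 0 := fun j => one_ne_zero
  -- positivity of the head product and ηv
  have hPX : 0 < ∏ i ∈ Finset.univ.filter (fun i : Fin (m + 1) => (i : ℕ) ≤ k), x i :=
    Finset.prod_pos fun i _ => hx i
  have hηv : 0 < ηv := Real.rpow_pos_of_pos hPX _
  have hzBne : ∀ i, zB i ≠ 0 := by
    intro i
    rw [hzBdef]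
    dsimp only
    split_ifs
    · exact_mod_cast hηv.ne'
    · exact hzAne i
  set L : ℝ := Real.log
    (∏ i ∈ Finset.univ.filter (fun i : Fin (m + 1) => (i : ℕ) ≤ k), x i) with hL
  have hlogηv : Real.log ηv = L / ((k : ℝ) + 1) := by
    rw [show ηv = (∏ i ∈ Finset.univ.filter (fun i : Fin (m + 1) => (i : ℕ) ≤ k), x i) ^
      (1 / ((k : ℝ) + 1)) from rfl, Real.log_rpow hPX]
    ring
  set a : Fin (k + 1) → ℝ := fun j => Real.log (x (embX m k h j)) with ha
  have hsuma : ∑ j, a j = L := by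
    rw [hL, prod_head h x, Real.log_prod (fun j _ => (hx _).ne')]
  set abar : ℝ := L / ((k : ℝ) + 1) with habar
  -- identification of the two points
  have hPtA : Pt h zA a = (zA, ζA, ηA) := by
    refine Prod.ext (funext fun i => ?_) (Prod.ext (funext fun j => ?_) rfl)
    · show zfun zA a i = zA i
      by_cases hi : (i : ℕ) ≤ k
      · rw [zfun, dif_pos hi, hzAx i hi]
        have : a ⟨(i : ℕ), Nat.lt_succ_of_le hi⟩ = Real.log (x i) := rfl
        rw [this, ← Complex.ofReal_exp, Real.exp_log (hx i)]
      · rw [zfun, dif_neg hi]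
    · show Complex.exp ((a j : ℝ) : ℂ) = ζA j
      have h1 : ζA j = ((x (embX m k h j) : ℝ) : ℂ) := by
        rw [hζAdef]
        exact hzAx _ (embX_le h j)
      rw [h1]
      have : a j = Real.log (x (embX m k h j)) := rfl
      rw [this, ← Complex.ofReal_exp, Real.exp_log (hx _)]
  have hexpabar : Complex.exp ((abar : ℝ) : ℂ) = ((ηv : ℝ) : ℂ) := by
    rw [← hlogηv, ← Complex.ofReal_exp, Real.exp_log hηv]
  have hPtB : Pt h zA (fun _ => abar) = (zB, ((ηv : ℝ) : ℂ) • oneζ, ηA) := by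
    refine Prod.ext (funext fun i => ?_) (Prod.ext (funext fun j => ?_) rfl)
    · show zfun zA (fun _ => abar) i = zB i
      by_cases hi : (i : ℕ) ≤ k
      · rw [zfun, dif_pos hi, hexpabar, hzBdef]
        exact (if_pos hi).symm
      · rw [zfun, dif_neg hi, hzBdef]
        exact (if_neg hi).symm
    · show Complex.exp ((abar : ℝ) : ℂ) = (((ηv : ℝ) : ℂ) • oneζ) j
      rw [hexpabar]
      simp [honeζdef]
  -- the convexity inequality
  have htailne : ∀ q, zA (embY m k h q) ≠ 0 := fun q => hzAne _
  have hmean0 := Vf_mean h hmk φ hG1 hG3 hadm zA htailne a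
  have hfun : (fun _ : Fin (k + 1) => (∑ j, a j) / ((k : ℝ) + 1)) =
      (fun _ : Fin (k + 1) => abar) := by rw [hsuma]
  rw [hfun] at hmean0
  have hVA : Vf h zA φ a =
      2 * Real.log (nsq zA) + (k : ℝ) * Real.log (nsq ζA) +
        ((m : ℝ) - (k : ℝ) - 1) * Real.log (nsq ηA) + φ (zA, ζA, ηA) := by
    rw [Vf, hPtA]
  have hVB : Vf h zA φ (fun _ => abar) =
      2 * Real.log (nsq zB) + (k : ℝ) * Real.log (nsq (((ηv : ℝ) : ℂ) • oneζ)) +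
        ((m : ℝ) - (k : ℝ) - 1) * Real.log (nsq ηA) +
        φ (zB, ((ηv : ℝ) : ℂ) • oneζ, ηA) := by
    rw [Vf, hPtB]
  rw [hVA, hVB] at hmean0
  -- scaling invariance
  have hφscale : φ (zB, ((ηv : ℝ) : ℂ) • oneζ, ηA) = φ (zB, oneζ, ηA) := by
    have hν : ((ηv : ℝ) : ℂ) ≠ 0 := by exact_mod_cast hηv.ne'
    have := hscal 1 ((ηv : ℝ) : ℂ) 1 one_ne_zero hν one_ne_zero (zB, oneζ, ηA)
    simpa [one_smul] using this
  have hnsqoneζ : 0 < nsq oneζ := nsq_pos _ 0 (honeζne 0)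
  have hnsqζB : Real.log (nsq (((ηv : ℝ) : ℂ) • oneζ)) =
      2 * Real.log ηv + Real.log (nsq oneζ) := by
    rw [nsq_smul, Complex.norm_real, Real.norm_eq_abs, abs_of_pos hηv,
      Real.log_mul (by positivity) hnsqoneζ.ne', Real.log_pow]
    norm_num
  -- log values of the products
  have le1 : Real.log (∏ i ∈ Finset.univ.filter (fun i : Fin (m + 1) => (i : ℕ) ≤ k),
      ‖zA i‖) = L := by
    rw [hL]
    congr 1
    refine Finset.prod_congr rfl fun i hi => ?_
    rw [hzAx i (Finset.mem_filter.mp hi).2, Complex.norm_real, Real.norm_eq_abs, abs_of_pos (hx i)]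
  have le2 : Real.log (∏ j, ‖ζA j‖) = L := by
    have : (∏ j, ‖ζA j‖) = ∏ j, x (embX m k h j) := by
      refine Finset.prod_congr rfl fun j _ => ?_
      rw [hζAdef]
      dsimp only
      rw [hzAx _ (embX_le h j), Complex.norm_real, Real.norm_eq_abs, abs_of_pos (hx _)]
    rw [this, hL, prod_head h x]
  have le3 : Real.log (∏ j, ‖oneζ j‖) = 0 := by
    simp [honeζdef]
  have hcard : (Finset.univ.filter (fun i : Fin (m + 1) => (i : ℕ) ≤ k)).card = k + 1 := by
    rw [head_eq_image h, Finset.card_image_of_injective _ (embX_inj h),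
      Finset.card_univ, Fintype.card_fin]
  have le4 : Real.log (∏ i ∈ Finset.univ.filter (fun i : Fin (m + 1) => (i : ℕ) ≤ k),
      ‖zB i‖) = L := by
    have e : (∏ i ∈ Finset.univ.filter (fun i : Fin (m + 1) => (i : ℕ) ≤ k),
        ‖zB i‖) = ηv ^ (k + 1) := by
      rw [Finset.prod_congr rfl (fun i hi => ?_), Finset.prod_const, hcard]
      rw [hzBdef]
      dsimp only
      rw [if_pos (Finset.mem_filter.mp hi).2, Complex.norm_real, Real.norm_eq_abs, abs_of_pos hηv]
    rw [e, Real.log_pow, hlogηv, habar]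
    push_cast
    field_simp
  have le5 : (∏ i ∈ Finset.univ.filter (fun i : Fin (m + 1) => k + 1 ≤ (i : ℕ)),
      ‖zB i‖) = ∏ i ∈ Finset.univ.filter (fun i : Fin (m + 1) => k + 1 ≤ (i : ℕ)),
      ‖zA i‖ := by
    refine Finset.prod_congr rfl fun i hi => ?_
    rw [hzBdef]
    dsimp only
    rw [if_neg (by have := (Finset.mem_filter.mp hi).2; omega)]
  -- the four psi values
  have hp1A := psi1_formula' hmk zA ζA ηA hzAne hζAne hηAne
  have hp2A := psi2_formula' hmk zA ζA ηA hzAne hζAne hηAne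
  have hp1B := psi1_formula' hmk zB oneζ ηA hzBne honeζne hηAne
  have hp2B := psi2_formula' hmk zB oneζ ηA hzBne honeζne hηAne
  rw [le1, le2] at hp1A
  rw [le2] at hp2A
  rw [le4, le3] at hp1B
  rw [le5, le3] at hp2B
  -- β L = 2 k log ηv
  have hβL : (2 * (k : ℝ) / ((k : ℝ) + 1)) * L = 2 * (k : ℝ) * Real.log ηv := by
    rw [hlogηv, habar]
    field_simp
  -- difference of the psi branches
  set NA : ℝ := 2 * Real.log (nsq zA) + (k : ℝ) * Real.log (nsq ζA) +
    ((m : ℝ) - (k : ℝ) - 1) * Real.log (nsq ηA) with hNA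
  set NB : ℝ := 2 * Real.log (nsq zB) + (k : ℝ) * Real.log (nsq oneζ) +
    ((m : ℝ) - (k : ℝ) - 1) * Real.log (nsq ηA) with hNB
  set d : ℝ := (2 * (k : ℝ) / ((k : ℝ) + 1)) * L + NB - NA with hd
  have h1 : psiY1 m k (zA, ζA, ηA) = psiY1 m k (zB, oneζ, ηA) + d := by
    rw [hp1A, hp1B, hd, hNA, hNB]
    ring
  have h2 : psiY2 m k (zA, ζA, ηA) = psiY2 m k (zB, oneζ, ηA) + d := by
    rw [hp2A, hp2B, hd, hNA, hNB]
    ring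
  have hkey : φ (zB, oneζ, ηA) + d ≤ φ (zA, ζA, ηA) := by
    rw [hd, hNA, hNB]
    rw [hφscale, hnsqζB] at hmean0
    linarith [hmean0, hβL]
  show φ (zB, oneζ, ηA) - psiY m k (zB, oneζ, ηA) ≤
      φ (zA, ζA, ηA) - psiY m k (zA, ζA, ηA)
  rw [psiY, psiY, h1, h2, min_add_add_right]
  have : psiY1 m k (zB, oneζ, ηA) ⊓ psiY2 m k (zB, oneζ, ηA) =
      min (psiY1 m k (zB, oneζ, ηA)) (psiY2 m k (zB, oneζ, ηA)) := rfl
  linarith [hkey]
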